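/- Let n be a natural number, b > 0, and let c : (Fin n → ℝ) → ℝ be a bounded function. Let S : (Fin n → ℝ) → ℝ be the function S(σ) = SS_{σ,b}(c). Then the b-smooth sensitivity of S itself is bounded: for every stream σ, SS_{σ,b}(S) ≤ (exp(b) − 1) · SS_{σ,b}(c). -/

import Mathlib

/-!
Write `S τ = SS_{τ,b}(c)`. By the triangle inequality for the Hamming distance,
`exp (-b · d(τ, ρ)) ≤ exp (b · d(σ, τ)) · exp (-b · d(σ, ρ))`, hence
`S τ ≤ exp (b · d(σ, τ)) · S σ`. For adjacent `σ', τ` this two-sided bound gives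
`|S σ' - S τ| ≤ (exp b - 1) · S τ`, i.e. `LS_τ(S) ≤ (exp b - 1) · S τ`; weighting by
`exp (-b · d(σ, τ))` and applying the first bound once more yields the claim.
-/
/-- Local sensitivity of `c` at `σ`: the supremum of `|c σ - c σ'|` over streams `σ'`
adjacent to `σ` (Hamming distance 1). -/
noncomputable def localSens {n : ℕ} (c : (Fin n → ℝ) → ℝ) (σ : Fin n → ℝ) : ℝ :=
  sSup {x : ℝ | ∃ σ' : Fin n → ℝ, hammingDist σ σ' = 1 ∧ x = |c σ - c σ'|}

/-- `b`-smooth sensitivity of `c` at `σ`: the supremum of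
`LS_{σ'}(c) · exp(-b · d(σ, σ'))` over all streams `σ'`. -/
noncomputable def smoothSens {n : ℕ} (b : ℝ) (c : (Fin n → ℝ) → ℝ) (σ : Fin n → ℝ) : ℝ :=
  sSup {x : ℝ | ∃ σ' : Fin n → ℝ, x = localSens c σ' * Real.exp (-(b * hammingDist σ σ'))}

open Real Set

lemma abs_sub_le_exp_sub_one_mul {x y b : ℝ} (hx : 0 ≤ x) (hxy : x ≤ exp b * y)
    (hyx : y ≤ exp b * x) : |x - y| ≤ (exp b - 1) * x := by
  have hinv : exp b * exp (-b) = 1 := by rw [← exp_add, add_neg_cancel, exp_zero]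
  -- `exp b + exp (-b) ≥ 2`, so the downward step `1 - exp (-b)` is smaller than `exp b - 1`.
  have hcosh : 2 ≤ exp b + exp (-b) := by
    nlinarith [mul_nonneg (exp_pos (-b)).le (sq_nonneg (exp b - 1))]
  have hy : exp (-b) * x ≤ y :=
    calc exp (-b) * x ≤ exp (-b) * (exp b * y) := mul_le_mul_of_nonneg_left hxy (exp_pos _).le
      _ = y := by linear_combination y * hinv
  rw [abs_sub_le_iff]
  constructor <;> nlinarith

section Sensitivity

variable {n : ℕ} {b : ℝ} {c : (Fin n → ℝ) → ℝ}

lemma localSens_nonneg (c : (Fin n → ℝ) → ℝ) (σ : Fin n → ℝ) : 0 ≤ localSens c σ :=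
  Real.sSup_nonneg (by rintro x ⟨σ', -, rfl⟩; positivity)

lemma bddAbove_range_localSens {M : ℝ} (hM : ∀ σ, |c σ| ≤ M) :
    BddAbove (range (localSens c)) := by
  refine ⟨2 * M, ?_⟩
  rintro _ ⟨σ, rfl⟩
  refine Real.sSup_le ?_ (by linarith [(abs_nonneg _).trans (hM σ)])
  rintro x ⟨σ', -, rfl⟩
  linarith [abs_sub (c σ) (c σ'), hM σ, hM σ']

lemma smoothSens_nonneg (b : ℝ) (c : (Fin n → ℝ) → ℝ) (σ : Fin n → ℝ) :
    0 ≤ smoothSens b c σ :=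
  Real.sSup_nonneg <| by
    rintro x ⟨σ', rfl⟩
    exact mul_nonneg (localSens_nonneg c σ') (exp_pos _).le

lemma localSens_mul_exp_le_smoothSens (hb : 0 ≤ b) (hc : BddAbove (range (localSens c)))
    (σ σ' : Fin n → ℝ) :
    localSens c σ' * exp (-(b * hammingDist σ σ')) ≤ smoothSens b c σ := by
  obtain ⟨L, hL⟩ := hc
  refine le_csSup ⟨L, ?_⟩ ⟨σ', rfl⟩
  rintro _ ⟨ρ, rfl⟩
  have hexp : exp (-(b * hammingDist σ ρ)) ≤ 1 :=
    exp_le_one_iff.2 (by simp only [neg_nonpos]; positivity)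
  calc localSens c ρ * exp (-(b * hammingDist σ ρ)) ≤ localSens c ρ * 1 :=
        mul_le_mul_of_nonneg_left hexp (localSens_nonneg c ρ)
    _ ≤ L := by simpa using hL ⟨ρ, rfl⟩

lemma smoothSens_le_exp_mul (hb : 0 ≤ b) (hc : BddAbove (range (localSens c)))
    (σ τ : Fin n → ℝ) :
    smoothSens b c τ ≤ exp (b * hammingDist σ τ) * smoothSens b c σ := by
  refine Real.sSup_le ?_ (mul_nonneg (exp_pos _).le (smoothSens_nonneg b c σ))
  rintro _ ⟨ρ, rfl⟩
  have htri : (hammingDist σ ρ : ℝ) ≤ hammingDist σ τ + hammingDist τ ρ := by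
    exact_mod_cast hammingDist_triangle σ τ ρ
  calc localSens c ρ * exp (-(b * hammingDist τ ρ))
      ≤ exp (b * hammingDist σ τ) * (localSens c ρ * exp (-(b * hammingDist σ ρ))) := by
        rw [mul_left_comm, ← exp_add]
        exact mul_le_mul_of_nonneg_left (exp_le_exp.2 (by nlinarith)) (localSens_nonneg c ρ)
    _ ≤ exp (b * hammingDist σ τ) * smoothSens b c σ := by
        gcongr
        exact localSens_mul_exp_le_smoothSens hb hc σ ρ

lemma localSens_smoothSens_le (hb : 0 ≤ b) (hc : BddAbove (range (localSens c)))
    (τ : Fin n → ℝ) :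
    localSens (smoothSens b c) τ ≤ (exp b - 1) * smoothSens b c τ := by
  refine Real.sSup_le ?_ (mul_nonneg (by linarith [add_one_le_exp b]) (smoothSens_nonneg b c τ))
  rintro _ ⟨σ', hadj, rfl⟩
  have hadj' : hammingDist σ' τ = 1 := hammingDist_comm τ σ' ▸ hadj
  refine abs_sub_le_exp_sub_one_mul (smoothSens_nonneg b c τ) ?_ ?_
  · simpa [hadj'] using smoothSens_le_exp_mul hb hc σ' τ
  · simpa [hadj] using smoothSens_le_exp_mul hb hc τ σ'

end Sensitivity

/-- The `b`-smooth sensitivity of the function `σ ↦ SS_{σ,b}(c)` itself is bounded by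
`(exp(b) − 1) · SS_{σ,b}(c)`. -/
theorem smoothSens_of_smoothSens {n : ℕ} (b : ℝ) (hb : 0 < b)
    (c : (Fin n → ℝ) → ℝ) (M : ℝ) (hM : ∀ σ : Fin n → ℝ, |c σ| ≤ M)
    (σ : Fin n → ℝ) :
    smoothSens b (fun τ => smoothSens b c τ) σ ≤ (Real.exp b - 1) * smoothSens b c σ := by
  have hc := bddAbove_range_localSens hM
  have hexp : 0 ≤ exp b - 1 := by linarith [add_one_le_exp b]
  refine Real.sSup_le ?_ (mul_nonneg hexp (smoothSens_nonneg b c σ))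
  rintro _ ⟨τ, rfl⟩
  have hweight : exp (b * hammingDist σ τ) * exp (-(b * hammingDist σ τ)) = 1 := by
    rw [← exp_add, add_neg_cancel, exp_zero]
  calc localSens (smoothSens b c) τ * exp (-(b * hammingDist σ τ))
      ≤ (exp b - 1) * smoothSens b c τ * exp (-(b * hammingDist σ τ)) := by
        gcongr
        exact localSens_smoothSens_le hb.le hc τ
    _ ≤ (exp b - 1) * (exp (b * hammingDist σ τ) * smoothSens b c σ)
          * exp (-(b * hammingDist σ τ)) := by
        gcongr
        exact smoothSens_le_exp_mul hb.le hc σ τ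
    _ = (exp b - 1) * smoothSens b c σ := by
        linear_combination (exp b - 1) * smoothSens b c σ * hweight
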